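/- arXiv:2102.01654 — 2 statements merged into one kernel-verified Lean document; each statement's English description precedes it below -/
import Mathlib

section
/- Let F : ℝ → ℝ be continuous and strictly increasing with F(x+1) = F(x)+1 for all x, and suppose that for some a₀ ∈ ℝ the restriction of F to the interval [a₀, a₀+1] is strictly concave. If the rotation number ρ(F) equals p/q with p ∈ ℤ, q a positive integer and gcd(p,q) = 1, then for every x ∈ ℝ the sequence n ↦ F^{nq}(x) − np converges as n → +∞ to a limit y ∈ ℝ satisfying F^q(y) = y + p. In other words, every orbit converges forward in time to a periodic point. -/
open Real Filter Set

/-- Rotation number of a lift `T` of a circle homeomorphism,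
defined as the limit of `T^[n] 0 / n` (which exists and is independent
of the base point for lifts of orientation-preserving circle homeos). -/
noncomputable def rotationNumber (T : ℝ → ℝ) : ℝ :=
  limUnder atTop (fun n : ℕ => T^[n] 0 / (n : ℝ))

/-- The expansion factor `Λ = sin(θ+α)/sin(θ−α)`. -/
noncomputable def Lam (α θ : ℝ) : ℝ := Real.sin (θ + α) / Real.sin (θ - α)

/-- The break point of increase `a₀ = (tan θ − 2ℓ)/(2 tan θ)`. -/
noncomputable def brk0 (ℓ θ : ℝ) : ℝ := (Real.tan θ - 2 * ℓ) / (2 * Real.tan θ)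

/-- The break point of decrease `a₁ = −(2ℓ + tan α)/(2 tan θ)`. -/
noncomputable def brk1 (ℓ α θ : ℝ) : ℝ := -(2 * ℓ + Real.tan α) / (2 * Real.tan θ)

/-- The two-piece definition of the lift on the fundamental interval `[a₁, a₁+1)`. -/
noncomputable def Ftrap0 (ℓ α θ x : ℝ) : ℝ :=
  if x ≤ brk0 ℓ θ then -brk1 ℓ α θ + (Lam α θ)⁻¹ * (x - brk1 ℓ α θ)
  else 1 - brk0 ℓ θ + Lam α θ * (x - brk0 ℓ θ)

/-- The lift `F_{ℓ,α,θ} : ℝ → ℝ` of the Poincaré map of the internal-wave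
billiard in a rectangular trapezoid: it is given by the two-piece formula on
`[a₁, a₁+1)` and extended by `F(x+k) = F(x)+k` for `k ∈ ℤ`. -/
noncomputable def Ftrap (ℓ α θ x : ℝ) : ℝ :=
  Ftrap0 ℓ α θ (x - ⌊x - brk1 ℓ α θ⌋) + ⌊x - brk1 ℓ α θ⌋

open Topology

/-!
Viewing `F` as a `CircleDeg1Lift` `f`, `rotationNumber F` is Mathlib's translation number
`τ f`. Since `τ f = p / q`, the map `g = f^q - p` has a fixed point `y₀`. Because `g` commutes
with integer translations, every `y₀ + m` with `m : ℤ` is fixed too, so the `g`-orbit of `x`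
stays between `y₀ + ⌊x - y₀⌋` and `y₀ + ⌈x - y₀⌉`. Like every orbit of a monotone map of `ℝ`,
it is monotone. So it converges, and by continuity the limit is a fixed point of `g`, i.e. a point `y` with
`F^[q] y = y + p`.
-/

namespace CircleDeg1Lift

def subInt (f : CircleDeg1Lift) (m : ℤ) : CircleDeg1Lift where
  toFun x := f x - m
  monotone' _ _ hxy := sub_le_sub_right (f.mono hxy) _
  map_add_one' x := by simp only [map_add_one]; ring

@[simp]
theorem subInt_apply (f : CircleDeg1Lift) (m : ℤ) (x : ℝ) : f.subInt m x = f x - m := rfl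

theorem subInt_iterate (f : CircleDeg1Lift) (m : ℤ) (n : ℕ) (x : ℝ) :
    (f.subInt m)^[n] x = f^[n] x - n * m := by
  induction n with
  | zero => simp
  | succ n ih =>
    rw [Function.iterate_succ_apply', Function.iterate_succ_apply', ih, subInt_apply,
      show (n : ℝ) * m = ((n * m : ℤ) : ℝ) by push_cast; ring, map_sub_int]
    push_cast
    ring

theorem rotationNumber_eq_translationNumber (f : CircleDeg1Lift) :
    rotationNumber f = f.translationNumber := by
  rw [rotationNumber]
  simpa only [coe_pow] using f.tendsto_translation_number₀.limUnder_eq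

theorem isFixedPt_add_int {g : CircleDeg1Lift} {y : ℝ} (hy : Function.IsFixedPt g y) (m : ℤ) :
    Function.IsFixedPt g (y + m) := by
  rw [Function.IsFixedPt, map_add_int, hy.eq]

theorem iterate_mem_Icc_of_isFixedPt {g : CircleDeg1Lift} {y : ℝ} (hy : Function.IsFixedPt g y)
    (x : ℝ) (n : ℕ) : g^[n] x ∈ Icc (y + ⌊x - y⌋) (y + ⌈x - y⌉) := by
  have hmono : Monotone g^[n] := g.monotone.iterate n
  constructor
  · calc y + ⌊x - y⌋ = g^[n] (y + ⌊x - y⌋) := ((isFixedPt_add_int hy _).iterate n).eq.symm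
      _ ≤ g^[n] x := hmono (by linarith [Int.floor_le (x - y)])
  · calc g^[n] x ≤ g^[n] (y + ⌈x - y⌉) := hmono (by linarith [Int.le_ceil (x - y)])
      _ = y + ⌈x - y⌉ := ((isFixedPt_add_int hy _).iterate n).eq

theorem exists_tendsto_iterate_isFixedPt {g : CircleDeg1Lift} (hg : Continuous g) {y₀ : ℝ}
    (hy₀ : Function.IsFixedPt g y₀) (x : ℝ) :
    ∃ y, Function.IsFixedPt g y ∧ Tendsto (fun n => g^[n] x) atTop (𝓝 y) := by
  have hbounds := iterate_mem_Icc_of_isFixedPt hy₀ x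
  have hconv : ∃ y, Tendsto (fun n => g^[n] x) atTop (𝓝 y) := by
    rcases le_total x (g x) with hx | hx
    · exact ⟨_, tendsto_atTop_ciSup (g.monotone.monotone_iterate_of_le_map hx)
        ⟨_, forall_mem_range.2 fun n => (hbounds n).2⟩⟩
    · exact ⟨_, tendsto_atTop_ciInf (g.monotone.antitone_iterate_of_map_le hx)
        ⟨_, forall_mem_range.2 fun n => (hbounds n).1⟩⟩
  obtain ⟨y, hy⟩ := hconv
  exact ⟨y, isFixedPt_of_tendsto_iterate hy hg.continuousAt, hy⟩

end CircleDeg1Lift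

theorem stmt2_general (F : ℝ → ℝ) (hF : Continuous F) (hmono : StrictMono F)
    (hlift : ∀ x : ℝ, F (x + 1) = F x + 1)
    (p : ℤ) (q : ℕ) (hq : 0 < q)
    (hrot : rotationNumber F = (p : ℝ) / (q : ℝ)) :
    ∀ x : ℝ, ∃ y : ℝ, F^[q] y = y + (p : ℝ) ∧
      Filter.Tendsto (fun n : ℕ => F^[n * q] x - (n : ℝ) * (p : ℝ))
        Filter.atTop (nhds y) := by
  intro x
  let f : CircleDeg1Lift := ⟨⟨F, hmono.monotone⟩, hlift⟩
  have hfF : ⇑f = F := rfl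
  have hτ : f.translationNumber = p / q := by
    rw [← f.rotationNumber_eq_translationNumber]; exact hrot
  obtain ⟨y₀, hy₀⟩ := (f.translationNumber_eq_rat_iff hF hq).1 hτ
  let g := (f ^ q).subInt p
  have hg : Continuous g := (f.continuous_pow hF q).sub continuous_const
  have hgy₀ : Function.IsFixedPt g y₀ := by
    simp only [Function.IsFixedPt, g, CircleDeg1Lift.subInt_apply, hy₀, add_sub_cancel_right]
  obtain ⟨y, hy, hlim⟩ := CircleDeg1Lift.exists_tendsto_iterate_isFixedPt hg hgy₀ x
  refine ⟨y, ?_, hlim.congr fun n => ?_⟩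
  · have : F^[q] y - p = y := by
      simpa only [g, CircleDeg1Lift.subInt_apply, CircleDeg1Lift.coe_pow, hfF] using hy.eq
    linarith
  · rw [CircleDeg1Lift.subInt_iterate, CircleDeg1Lift.coe_pow, hfF, ← Function.iterate_mul,
      mul_comm]

/-- for a lift F of a circle homeomorphism which is strictly
concave on a fundamental interval, with rational rotation number p/q in lowest
terms, every orbit converges forward in time to a periodic point:
F^[n*q](x) − n*p converges to some y with F^[q](y) = y + p. -/
theorem stmt2 (F : ℝ → ℝ) (hF : Continuous F) (hmono : StrictMono F)
    (hlift : ∀ x : ℝ, F (x + 1) = F x + 1) (a : ℝ)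
    (hconc : StrictConcaveOn ℝ (Set.Icc a (a + 1)) F)
    (p : ℤ) (q : ℕ) (hq : 0 < q) (hpq : Int.gcd p (q : ℤ) = 1)
    (hrot : rotationNumber F = (p : ℝ) / (q : ℝ)) :
    ∀ x : ℝ, ∃ y : ℝ, F^[q] y = y + (p : ℝ) ∧
      Filter.Tendsto (fun n : ℕ => F^[n * q] x - (n : ℝ) * (p : ℝ))
        Filter.atTop (nhds y) :=
  stmt2_general F hF hmono hlift p q hq hrot
end

section
/- Fix ℓ > 0 and α ∈ (0, π/2). On the interval of parameters θ ∈ (arctan(2ℓ + tan α), π/2), the function θ ↦ ρ(F_{ℓ,α,θ}) is continuous and non-increasing. -/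
open Real Filter Set

/-!
For `θ` in the interval put `T = tan θ` and `A = tan α`. Then `Λ = (T + A) / (T - A)` and
`a₁ = a₀ - Λ / (Λ + 1)`, so `F_{ℓ,α,θ}` depends only on `(a₀, Λ)`: on `[a₁, a₁ + 1]` it is the
convex broken line `G(x) = 1 - a₀ + max (Λ⁻¹ (x - a₀)) (Λ (x - a₀))`, and `F(x) ≤ G(x - k) + k` for
every `k : ℤ`, with equality for `k = ⌊x - a₁⌋`. The line `G` decreases in `a₀` and increases in
`Λ`; as `θ` grows, `a₀ = 1/2 - ℓ/T` increases and `Λ` decreases, so the lifts decrease pointwise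
and so does the rotation number.

For continuity, the lift depends jointly continuously on `(θ, x)`. If `ρ(F_{θ₀}) < p/q` then
`F_{θ₀}^q(0) < p`; this persists for `θ` near `θ₀` and forces `ρ(F_θ) ≤ p/q`.
-/

open Topology

lemma rotationNumber_coe (f : CircleDeg1Lift) : rotationNumber f = f.translationNumber :=
  (f.tendsto_translation_number₀.congr fun n => by rw [CircleDeg1Lift.coe_pow]).limUnder_eq

namespace CircleDeg1Lift

variable {g : CircleDeg1Lift} {p : ℤ} {q : ℕ}

lemma translationNumber_le_div_of_pow_apply_zero_le (hq : 0 < q) (h : (g ^ q) 0 ≤ p) :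
    g.translationNumber ≤ p / q := by
  have := (g ^ q).translationNumber_le_of_le_add_int (x := 0) (by rwa [zero_add])
  rw [translationNumber_pow] at this
  rw [le_div_iff₀ (by positivity)]
  linarith

lemma div_le_translationNumber_of_le_pow_apply_zero (hq : 0 < q) (h : p ≤ (g ^ q) 0) :
    p / q ≤ g.translationNumber := by
  have := (g ^ q).le_translationNumber_of_add_int_le (x := 0) (by rwa [zero_add])
  rw [translationNumber_pow] at this
  rw [div_le_iff₀ (by positivity)]
  linarith

lemma pow_apply_zero_lt_of_translationNumber_lt_div (hq : 0 < q)
    (h : g.translationNumber < p / q) : (g ^ q) 0 < p := by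
  have h' : (g ^ q).translationNumber < p := by
    rw [translationNumber_pow, ← lt_div_iff₀' (by positivity)]
    exact h
  simpa using (g ^ q).map_lt_of_translationNumber_lt_int h' 0

lemma lt_pow_apply_zero_of_div_lt_translationNumber (hq : 0 < q)
    (h : p / q < g.translationNumber) : (p : ℝ) < (g ^ q) 0 := by
  have h' : (p : ℝ) < (g ^ q).translationNumber := by
    rw [translationNumber_pow, ← div_lt_iff₀' (by positivity)]
    exact h
  simpa using (g ^ q).lt_map_of_int_lt_translationNumber h' 0

variable {X : Type*} [TopologicalSpace X] {f : X → CircleDeg1Lift}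

lemma continuous_pow_apply (hf : Continuous fun z : X × ℝ => f z.1 z.2) (n : ℕ) :
    Continuous fun z : X × ℝ => (f z.1 ^ n) z.2 := by
  induction n with
  | zero => simpa using continuous_snd
  | succ n ih =>
    simp only [pow_succ', mul_apply]
    exact hf.comp (continuous_fst.prodMk ih)

lemma eventually_translationNumber_lt {x₀ : X}
    (hf : ∀ n : ℕ, ContinuousAt (fun x => (f x ^ n) 0) x₀) {r : ℝ}
    (hr : (f x₀).translationNumber < r) : ∀ᶠ x in 𝓝 x₀, (f x).translationNumber < r := by
  obtain ⟨s, hs, hsr⟩ := exists_rat_btwn hr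
  rw [Rat.cast_def] at hs hsr
  filter_upwards [(hf s.den).eventually_lt continuousAt_const
    (pow_apply_zero_lt_of_translationNumber_lt_div s.pos hs)] with x hx
  exact (translationNumber_le_div_of_pow_apply_zero_le s.pos hx.le).trans_lt hsr

lemma eventually_lt_translationNumber {x₀ : X}
    (hf : ∀ n : ℕ, ContinuousAt (fun x => (f x ^ n) 0) x₀) {r : ℝ}
    (hr : r < (f x₀).translationNumber) : ∀ᶠ x in 𝓝 x₀, r < (f x).translationNumber := by
  obtain ⟨s, hrs, hs⟩ := exists_rat_btwn hr
  rw [Rat.cast_def] at hs hrs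
  filter_upwards [continuousAt_const.eventually_lt (hf s.den)
    (lt_pow_apply_zero_of_div_lt_translationNumber s.pos hs)] with x hx
  exact hrs.trans_le (div_le_translationNumber_of_le_pow_apply_zero s.pos hx.le)

theorem continuous_translationNumber (hf : Continuous fun z : X × ℝ => f z.1 z.2) :
    Continuous fun x => (f x).translationNumber := by
  have hpow (n : ℕ) : Continuous fun x => (f x ^ n) 0 :=
    (continuous_pow_apply hf n).comp (continuous_id.prodMk continuous_const)
  refine continuous_iff_continuousAt.2 fun x₀ => tendsto_order.2
    ⟨fun r hr => ?_, fun r hr => ?_⟩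
  · exact eventually_lt_translationNumber (fun n => (hpow n).continuousAt) hr
  · exact eventually_translationNumber_lt (fun n => (hpow n).continuousAt) hr

end CircleDeg1Lift

noncomputable def extendDegOne (c : ℝ) (g : ℝ → ℝ) (x : ℝ) : ℝ := g (x - ⌊x - c⌋) + ⌊x - c⌋

section extendDegOne

variable {c : ℝ} {g : ℝ → ℝ}

lemma extendDegOne_add_one (x : ℝ) : extendDegOne c g (x + 1) = extendDegOne c g x + 1 := by
  have : ⌊x + 1 - c⌋ = ⌊x - c⌋ + 1 := by rw [add_sub_right_comm, Int.floor_add_one]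
  simp only [extendDegOne, this]
  push_cast
  ring_nf

lemma sub_floor_mem_Ico (c x : ℝ) : x - ⌊x - c⌋ ∈ Ico c (c + 1) :=
  ⟨by linarith [Int.floor_le (x - c)], by linarith [Int.lt_floor_add_one (x - c)]⟩

lemma monotone_extendDegOne (hg : MonotoneOn g (Icc c (c + 1))) (hper : g (c + 1) = g c + 1) :
    Monotone (extendDegOne c g) := by
  intro x y hxy
  have hx := Ico_subset_Icc_self (sub_floor_mem_Ico c x)
  have hy := Ico_subset_Icc_self (sub_floor_mem_Ico c y)
  have hc : c ∈ Icc c (c + 1) := left_mem_Icc.2 (by linarith)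
  have hc1 : c + 1 ∈ Icc c (c + 1) := right_mem_Icc.2 (by linarith)
  rcases (Int.floor_le_floor (sub_le_sub_right hxy c)).eq_or_lt with h | h
  · have h' : (⌊x - c⌋ : ℝ) = ⌊y - c⌋ := congrArg _ h
    unfold extendDegOne
    rw [h'] at hx ⊢
    exact add_le_add (hg hx hy (by linarith)) le_rfl
  · have h' : (⌊x - c⌋ : ℝ) + 1 ≤ ⌊y - c⌋ := by exact_mod_cast h
    calc extendDegOne c g x ≤ g (c + 1) + ⌊x - c⌋ :=
          add_le_add (hg hx hc1 hx.2) le_rfl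
      _ = g c + (⌊x - c⌋ + 1) := by rw [hper]; ring
      _ ≤ extendDegOne c g y := add_le_add (hg hc hy hy.1) h'

/-- The hypotheses say that `g w - w` grows in unit steps away from `[c, c + 1]`, so on each orbit
`x + ℤ` it is smallest in `[c, c + 1)`, where `extendDegOne c g` agrees with `g`. -/
lemma extendDegOne_le (hup : ∀ w, c ≤ w → g w + 1 ≤ g (w + 1))
    (hdown : ∀ w, w ≤ c → g (w + 1) ≤ g w + 1) (x : ℝ) : extendDegOne c g x ≤ g x := by
  set z := x - ⌊x - c⌋
  have hz := sub_floor_mem_Ico c x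
  suffices ∀ k : ℤ, g z + k ≤ g (z + k) by
    have := this ⌊x - c⌋
    simp only [z, sub_add_cancel] at this
    exact this
  intro k
  induction k with
  | zero => simp
  | succ i ih =>
    push_cast at ih ⊢
    have := hup (z + i) (by linarith [hz.1, (Nat.cast_nonneg i : (0 : ℝ) ≤ i)])
    rw [← add_assoc z]; linarith
  | pred i ih =>
    push_cast at ih ⊢
    have := hdown (z + (-i - 1)) (by linarith [hz.2, (Nat.cast_nonneg i : (0 : ℝ) ≤ i)])
    ring_nf at this ih ⊢
    linarith

theorem continuous_extendDegOne {X : Type*} [TopologicalSpace X] {c : X → ℝ}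
    {g : X → ℝ → ℝ} (hc : Continuous c) (hg : Continuous fun z : X × ℝ => g z.1 z.2)
    (hper : ∀ x, g x (c x + 1) = g x (c x) + 1) :
    Continuous fun z : X × ℝ => extendDegOne (c z.1) (g z.1) z.2 := by
  have hper' : ∀ x, g x (c x + 0) - 0 = g x (c x + 1) - 1 := fun x => by simp [hper]
  have hfract := (ContinuousOn.comp_fract' (f := fun x σ => g x (c x + σ) - σ)
    (((hg.comp (continuous_fst.prodMk ((hc.comp continuous_fst).add continuous_snd))).sub
      continuous_snd).continuousOn) hper').comp
    (continuous_fst.prodMk (continuous_snd.sub (hc.comp continuous_fst)))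
  have key : (fun z : X × ℝ => extendDegOne (c z.1) (g z.1) z.2) = fun z =>
      (g z.1 (c z.1 + Int.fract (z.2 - c z.1)) - Int.fract (z.2 - c z.1)) + (z.2 - c z.1) := by
    funext z
    simp only [extendDegOne, Int.fract]
    ring_nf
  rw [key]
  exact hfract.add (continuous_snd.sub (hc.comp continuous_fst))

noncomputable def kinkMap (a L x : ℝ) : ℝ := 1 - a + max (L⁻¹ * (x - a)) (L * (x - a))

section kinkMap

variable {a a' L L' : ℝ}

lemma kinkMap_monotone (hL : 0 ≤ L) : Monotone (kinkMap a L) := by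
  intro x y hxy
  unfold kinkMap
  have := inv_nonneg.2 hL
  gcongr

lemma kinkMap_le_of_le_left (hL : 0 ≤ L) (ha : a ≤ a') (x : ℝ) :
    kinkMap a' L x ≤ kinkMap a L x := by
  unfold kinkMap
  have := inv_nonneg.2 hL
  gcongr

lemma kinkMap_le_of_le_right (hL' : 1 ≤ L') (hLL : L' ≤ L) (x : ℝ) :
    kinkMap a L' x ≤ kinkMap a L x := by
  unfold kinkMap
  have hM : L⁻¹ ≤ L'⁻¹ := inv_anti₀ (by linarith) hLL
  have hM' : L'⁻¹ ≤ 1 := inv_le_one_of_one_le₀ hL'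
  gcongr 1 - a + ?_
  rcases le_total (x - a) 0 with hs | hs
  · exact max_le (le_max_of_le_left (mul_le_mul_of_nonpos_right hM hs))
      (le_max_of_le_left (mul_le_mul_of_nonpos_right (by linarith) hs))
  · exact max_le (le_max_of_le_right (mul_le_mul_of_nonneg_right (by linarith) hs))
      (le_max_of_le_right (mul_le_mul_of_nonneg_right hLL hs))

/-- With `s = w - a`, this compares the slope-`L⁻¹` branch at `w`, raised by one, with the
slope-`L` branch at `w + 1`: the sign changes exactly at `w = a - L / (L + 1)`. -/
lemma inv_mul_add_one_sub_mul (hL : L ≠ 0) (s : ℝ) :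
    L⁻¹ * s + 1 - L * (s + 1) = -(L⁻¹ * ((L - 1) * (s * (L + 1) + L))) := by
  field_simp
  ring

lemma add_one_le_kinkMap_add_one (hL : 1 ≤ L) {w : ℝ} (hw : a - L / (L + 1) ≤ w) :
    kinkMap a L w + 1 ≤ kinkMap a L (w + 1) := by
  have hw' : 0 ≤ (w - a) * (L + 1) + L := by
    have := (le_div_iff₀ (by linarith : (0 : ℝ) < L + 1)).1 (by linarith : a - w ≤ L / (L + 1))
    linarith
  have hM : 0 ≤ L⁻¹ := inv_nonneg.2 (by linarith)
  have key := inv_mul_add_one_sub_mul (by positivity : L ≠ 0) (w - a)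
  have := mul_nonneg hM (mul_nonneg (sub_nonneg.2 hL) hw')
  unfold kinkMap
  rw [add_sub_right_comm w 1 a]
  have : max (L⁻¹ * (w - a)) (L * (w - a)) + 1 ≤ L * (w - a + 1) := by
    rw [← max_add_add_right]
    apply max_le <;> linarith
  linarith [le_max_right (L⁻¹ * (w - a + 1)) (L * (w - a + 1))]

lemma kinkMap_add_one_le_add_one (hL : 1 ≤ L) {w : ℝ} (hw : w ≤ a - L / (L + 1)) :
    kinkMap a L (w + 1) ≤ kinkMap a L w + 1 := by
  have hw' : (w - a) * (L + 1) + L ≤ 0 := by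
    have := (div_le_iff₀ (by linarith : (0 : ℝ) < L + 1)).1 (by linarith : L / (L + 1) ≤ a - w)
    linarith
  have hM : 0 ≤ L⁻¹ := inv_nonneg.2 (by linarith)
  have hM1 : L⁻¹ ≤ 1 := inv_le_one_of_one_le₀ hL
  have key := inv_mul_add_one_sub_mul (by positivity : L ≠ 0) (w - a)
  have := mul_nonneg hM (mul_nonneg (sub_nonneg.2 hL) (neg_nonneg.2 hw'))
  unfold kinkMap
  rw [add_sub_right_comm w 1 a]
  have : max (L⁻¹ * (w - a + 1)) (L * (w - a + 1)) ≤ L⁻¹ * (w - a) + 1 := by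
    apply max_le <;> linarith
  linarith [le_max_left (L⁻¹ * (w - a)) (L * (w - a))]

lemma kinkMap_add_one_eq (hL : 1 ≤ L) :
    kinkMap a L (a - L / (L + 1) + 1) = kinkMap a L (a - L / (L + 1)) + 1 :=
  le_antisymm (kinkMap_add_one_le_add_one hL le_rfl) (add_one_le_kinkMap_add_one hL le_rfl)

end kinkMap

/-- On `[b, b + 1]`, `b = a - L / (L + 1)`, this is the broken line through `(b, -b)`,
`(a, 1 - a)`, `(b + 1, 1 - b)` with slopes `L⁻¹` and `L`; `F_{ℓ,α,θ}` is `kinkLift a₀ Λ`. -/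
noncomputable def kinkLift (a : ℝ) (L : Ici (1 : ℝ)) : CircleDeg1Lift where
  toFun := extendDegOne (a - L / (L + 1)) (kinkMap a L)
  monotone' := monotone_extendDegOne ((kinkMap_monotone (by linarith [mem_Ici.1 L.2])).monotoneOn _)
    (kinkMap_add_one_eq L.2)
  map_add_one' := extendDegOne_add_one

lemma kinkLift_apply_le_kinkMap (a : ℝ) (L : Ici (1 : ℝ)) (x : ℝ) :
    kinkLift a L x ≤ kinkMap a L x :=
  extendDegOne_le (fun _ hw => add_one_le_kinkMap_add_one L.2 hw)
    (fun _ hw => kinkMap_add_one_le_add_one L.2 hw) x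

lemma kinkLift_anti {a a' : ℝ} {L L' : Ici (1 : ℝ)} (ha : a ≤ a') (hL : L' ≤ L) :
    kinkLift a' L' ≤ kinkLift a L := by
  intro x
  set k := ⌊x - (a - L / (L + 1))⌋
  calc kinkLift a' L' x = kinkLift a' L' (x - k) + k := by rw [CircleDeg1Lift.map_sub_int]; ring
    _ ≤ kinkMap a' L' (x - k) + k := by grw [kinkLift_apply_le_kinkMap]
    _ ≤ kinkMap a L' (x - k) + k := by grw [kinkMap_le_of_le_left (by linarith [mem_Ici.1 L'.2]) ha]
    _ ≤ kinkMap a L (x - k) + k := by grw [kinkMap_le_of_le_right L'.2 hL]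
    _ = kinkLift a L x := rfl

lemma continuous_kinkLift :
    Continuous fun z : (ℝ × Ici (1 : ℝ)) × ℝ => kinkLift z.1.1 z.1.2 z.2 := by
  have hpos (L : Ici (1 : ℝ)) : (L : ℝ) ≠ 0 := by linarith [mem_Ici.1 L.2]
  have hpos' (L : Ici (1 : ℝ)) : (L : ℝ) + 1 ≠ 0 := by linarith [mem_Ici.1 L.2]
  refine continuous_extendDegOne (c := fun p : ℝ × Ici (1 : ℝ) => p.1 - p.2 / (p.2 + 1))
    (g := fun p => kinkMap p.1 p.2) (by fun_prop (disch := exact fun p => hpos' p.2)) ?_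
    (fun p => kinkMap_add_one_eq p.2.2)
  unfold kinkMap
  fun_prop (disch := exact fun z => hpos z.1.2)

lemma continuous_translationNumber_kinkLift :
    Continuous fun p : ℝ × Ici (1 : ℝ) => (kinkLift p.1 p.2).translationNumber :=
  CircleDeg1Lift.continuous_translationNumber continuous_kinkLift

def admissibleAngles (ℓ α : ℝ) : Set ℝ := Ioo (arctan (2 * ℓ + tan α)) (π / 2)

section Trapezoid

variable {ℓ α θ θ' : ℝ}

lemma admissibleAngles_subset : admissibleAngles ℓ α ⊆ Ioo (-(π / 2)) (π / 2) :=
  Ioo_subset_Ioo_left (neg_pi_div_two_lt_arctan _).le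

lemma tan_gt_of_mem_admissibleAngles (hθ : θ ∈ admissibleAngles ℓ α) :
    2 * ℓ + tan α < tan θ := by
  have := strictMonoOn_tan (arctan_mem_Ioo _) (admissibleAngles_subset hθ) hθ.1
  rwa [tan_arctan] at this

lemma Lam_eq_tan (hα : cos α ≠ 0) (hθ : cos θ ≠ 0) :
    Lam α θ = (tan θ + tan α) / (tan θ - tan α) := by
  rw [Lam, sin_add, sin_sub, tan_eq_sin_div_cos, tan_eq_sin_div_cos, div_add_div _ _ hθ hα,
    div_sub_div _ _ hθ hα, div_div_div_cancel_right₀ (mul_ne_zero hθ hα)]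

lemma Lam_eq_of_mem (hα : 0 < α) (hα2 : α < π / 2) (hθ : θ ∈ admissibleAngles ℓ α) :
    Lam α θ = (tan θ + tan α) / (tan θ - tan α) :=
  Lam_eq_tan (cos_pos_of_mem_Ioo ⟨by linarith, hα2⟩).ne'
    (cos_pos_of_mem_Ioo (admissibleAngles_subset hθ)).ne'

lemma tan_le_tan_of_mem_admissibleAngles (hθ : θ ∈ admissibleAngles ℓ α)
    (hθ' : θ' ∈ admissibleAngles ℓ α) (h : θ ≤ θ') : tan θ ≤ tan θ' :=
  strictMonoOn_tan.monotoneOn (admissibleAngles_subset hθ) (admissibleAngles_subset hθ') h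

variable (hℓ : 0 < ℓ) (hα : 0 < α) (hα2 : α < π / 2)
include hℓ hα hα2

lemma one_le_Lam (hθ : θ ∈ admissibleAngles ℓ α) : 1 ≤ Lam α θ := by
  have hA := tan_pos_of_pos_of_lt_pi_div_two hα hα2
  have hT := tan_gt_of_mem_admissibleAngles hθ
  rw [Lam_eq_of_mem hα hα2 hθ, le_div_iff₀ (by linarith)]
  linarith

lemma brk1_eq_brk0_sub (hθ : θ ∈ admissibleAngles ℓ α) :
    brk1 ℓ α θ = brk0 ℓ θ - Lam α θ / (Lam α θ + 1) := by
  have hA := tan_pos_of_pos_of_lt_pi_div_two hα hα2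
  have hT := tan_gt_of_mem_admissibleAngles hθ
  have h1 : tan θ - tan α ≠ 0 := by linarith
  have h2 : tan θ ≠ 0 := by linarith
  have hL1 : (tan θ + tan α) / (tan θ - tan α) + 1 = 2 * tan θ / (tan θ - tan α) := by
    field_simp
    ring
  rw [Lam_eq_of_mem hα hα2 hθ, hL1, div_div_div_cancel_right₀ h1, brk1, brk0]
  field_simp
  ring

lemma Ftrap_eq_kinkLift (hθ : θ ∈ admissibleAngles ℓ α) :
    Ftrap ℓ α θ = kinkLift (brk0 ℓ θ) ⟨Lam α θ, one_le_Lam hℓ hα hα2 hθ⟩ := by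
  have hL := one_le_Lam hℓ hα hα2 hθ
  have hM : (Lam α θ)⁻¹ ≤ Lam α θ := (inv_le_one_of_one_le₀ hL).trans hL
  have hFtrap0 : Ftrap0 ℓ α θ = kinkMap (brk0 ℓ θ) (Lam α θ) := by
    funext y
    rw [Ftrap0, brk1_eq_brk0_sub hℓ hα hα2 hθ, kinkMap]
    split_ifs with hy
    · rw [max_eq_left (mul_le_mul_of_nonpos_right hM (by linarith))]
      field_simp
      ring
    · rw [max_eq_right (mul_le_mul_of_nonneg_right hM (by linarith))]
  change extendDegOne (brk1 ℓ α θ) (Ftrap0 ℓ α θ) = extendDegOne _ _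
  rw [hFtrap0, brk1_eq_brk0_sub hℓ hα hα2 hθ]

lemma continuousOn_brk0 : ContinuousOn (brk0 ℓ) (admissibleAngles ℓ α) := by
  have htan := continuousOn_tan_Ioo.mono (admissibleAngles_subset (ℓ := ℓ) (α := α))
  refine (htan.sub continuousOn_const).div (continuousOn_const.mul htan) fun θ hθ => ?_
  have := tan_gt_of_mem_admissibleAngles hθ
  have := tan_pos_of_pos_of_lt_pi_div_two hα hα2
  exact (by linarith : 0 < 2 * tan θ).ne'

lemma continuousOn_Lam : ContinuousOn (Lam α) (admissibleAngles ℓ α) := by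
  refine (continuous_sin.comp (continuous_add_const α)).continuousOn.div
    (continuous_sin.comp (continuous_sub_right α)).continuousOn fun θ hθ h => ?_
  have := one_le_Lam hℓ hα hα2 hθ
  rw [Lam, show sin (θ - α) = 0 from h, div_zero] at this
  linarith

lemma monotoneOn_brk0 : MonotoneOn (brk0 ℓ) (admissibleAngles ℓ α) := by
  intro θ hθ θ' hθ' h
  have hA := tan_pos_of_pos_of_lt_pi_div_two hα hα2
  have hT := tan_gt_of_mem_admissibleAngles hθ
  have htan := tan_le_tan_of_mem_admissibleAngles hθ hθ' h
  rw [brk0, brk0, div_le_div_iff₀ (by linarith) (by linarith)]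
  nlinarith [mul_le_mul_of_nonneg_left htan hℓ.le]

lemma antitoneOn_Lam : AntitoneOn (Lam α) (admissibleAngles ℓ α) := by
  intro θ hθ θ' hθ' h
  have hA := tan_pos_of_pos_of_lt_pi_div_two hα hα2
  have hT := tan_gt_of_mem_admissibleAngles hθ
  have htan := tan_le_tan_of_mem_admissibleAngles hθ hθ' h
  rw [Lam_eq_of_mem hα hα2 hθ, Lam_eq_of_mem hα hα2 hθ',
    div_le_div_iff₀ (by linarith) (by linarith)]
  nlinarith [mul_le_mul_of_nonneg_left htan hA.le]

end Trapezoid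

/-- for fixed ℓ > 0 and α ∈ (0, π/2), the rotation number
θ ↦ ρ(F_{ℓ,α,θ}) is continuous and non-increasing on
(arctan(2ℓ + tan α), π/2). -/
theorem stmt7 (ℓ α : ℝ) (hℓ : 0 < ℓ) (hα : 0 < α) (hα2 : α < π / 2) :
    ContinuousOn (fun θ : ℝ => rotationNumber (Ftrap ℓ α θ))
      (Set.Ioo (Real.arctan (2 * ℓ + Real.tan α)) (π / 2)) ∧
    AntitoneOn (fun θ : ℝ => rotationNumber (Ftrap ℓ α θ))
      (Set.Ioo (Real.arctan (2 * ℓ + Real.tan α)) (π / 2)) := by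
  have hrot {θ} (hθ : θ ∈ admissibleAngles ℓ α) : rotationNumber (Ftrap ℓ α θ) =
      (kinkLift (brk0 ℓ θ) ⟨Lam α θ, one_le_Lam hℓ hα hα2 hθ⟩).translationNumber := by
    rw [Ftrap_eq_kinkLift hℓ hα hα2 hθ, rotationNumber_coe]
  change ContinuousOn _ (admissibleAngles ℓ α) ∧ AntitoneOn _ (admissibleAngles ℓ α)
  refine ⟨?_, fun θ hθ θ' hθ' h => ?_⟩
  · rw [continuousOn_iff_continuous_domRestrict]
    have hparams : Continuous fun θ : admissibleAngles ℓ α =>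
        (brk0 ℓ θ, (⟨Lam α θ, one_le_Lam hℓ hα hα2 θ.2⟩ : Ici (1 : ℝ))) :=
      (continuousOn_brk0 hℓ hα hα2).domRestrict.prodMk
        ((continuousOn_Lam hℓ hα hα2).domRestrict.subtype_mk _)
    convert continuous_translationNumber_kinkLift.comp hparams using 1
    funext θ
    exact hrot θ.2
  · dsimp only
    rw [hrot hθ, hrot hθ']
    exact CircleDeg1Lift.translationNumber_mono (kinkLift_anti
      (monotoneOn_brk0 hℓ hα hα2 hθ hθ' h) (antitoneOn_Lam hℓ hα hα2 hθ hθ' h))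
end extendDegOne
end
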